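/- arXiv:2202.12793 — 6 statements merged into one kernel-verified Lean document; each statement's English description precedes it below -/
import Mathlib

section
/- For any positive integer d, consider the point set P = {e_1, …, e_d} of the first d standard basis vectors in ℝ^{2d}. For any k ≥ 1 and any set of k centers c_1, …, c_k ∈ ℝ^{2d}, each of Euclidean norm 1, it holds that ∑_{i=1}^d min_{j=1,…,k} ‖e_i − c_j‖² ≥ 2d − 2√(dk). -/
/-!
Send each `e_i` to a nearest center `c_{σ i}`. For unit vectors `‖e_i - c_j‖² = 2 - 2⟪e_i, c_j⟫`,
so it suffices to bound `∑ᵢ ⟪e_i, c_{σ i}⟫` by `√(dk)`. Grouping the `e_i` by their center,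
Cauchy–Schwarz with Bessel's inequality bounds the contribution of the fiber `σ⁻¹ j` by
`√#(σ⁻¹ j)`, and a second Cauchy–Schwarz gives `∑ⱼ √#(σ⁻¹ j) ≤ √(k · d)`.
-/

open Finset

lemma Real.sum_sqrt_le_sqrt_card_mul_sum {ι : Type*} (s : Finset ι) {f : ι → ℝ}
    (hf : ∀ i, 0 ≤ f i) : ∑ i ∈ s, √(f i) ≤ √(#s * ∑ i ∈ s, f i) := by
  simpa [Real.sqrt_mul (Nat.cast_nonneg _)] using
    Real.sum_sqrt_mul_sqrt_le s (fun _ ↦ zero_le_one) hf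

section

variable {E : Type*} [NormedAddCommGroup E] [InnerProductSpace ℝ E]

lemma Orthonormal.sum_inner_le_sqrt_card_mul_norm {ι : Type*} {v : ι → E}
    (hv : Orthonormal ℝ v) (s : Finset ι) (x : E) :
    ∑ i ∈ s, inner ℝ (v i) x ≤ √(#s) * ‖x‖ := by
  have bessel : ∑ i ∈ s, inner ℝ (v i) x ^ 2 ≤ ‖x‖ ^ 2 := by
    simpa only [Real.norm_eq_abs, sq_abs] using hv.sum_inner_products_le x (s := s)
  calc ∑ i ∈ s, inner ℝ (v i) x = ∑ i ∈ s, 1 * inner ℝ (v i) x := by simp only [one_mul]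
    _ ≤ √(∑ i ∈ s, 1 ^ 2) * √(∑ i ∈ s, inner ℝ (v i) x ^ 2) :=
      Real.sum_mul_le_sqrt_mul_sqrt _ _ _
    _ ≤ √(#s) * ‖x‖ := by
      rw [← Real.sqrt_sq (norm_nonneg x)]
      simp only [one_pow, sum_const, nsmul_eq_mul, mul_one]
      gcongr

variable {ι κ : Type*} [Fintype ι] [Fintype κ]

lemma Orthonormal.sum_inner_comp_le_sqrt {v : ι → E} (hv : Orthonormal ℝ v) {c : κ → E}
    (hc : ∀ j, ‖c j‖ ≤ 1) (σ : ι → κ) :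
    ∑ i, inner ℝ (v i) (c (σ i)) ≤ √(Fintype.card κ * Fintype.card ι) := by
  classical
  calc ∑ i, inner ℝ (v i) (c (σ i))
      = ∑ j, ∑ i with σ i = j, inner ℝ (v i) (c j) := by
        rw [← sum_fiberwise univ σ]
        refine sum_congr rfl fun j _ ↦ sum_congr rfl fun i hi ↦ ?_
        rw [(mem_filter.1 hi).2]
    _ ≤ ∑ j, √(#{i | σ i = j} : ℝ) := by
        gcongr with j
        exact (hv.sum_inner_le_sqrt_card_mul_norm _ _).trans
          (mul_le_of_le_one_right (Real.sqrt_nonneg _) (hc j))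
    _ ≤ √(Fintype.card κ * ∑ j, (#{i | σ i = j} : ℝ)) :=
        Real.sum_sqrt_le_sqrt_card_mul_sum _ fun _ ↦ Nat.cast_nonneg _
    _ = √(Fintype.card κ * Fintype.card ι) := by
        rw [← Nat.cast_sum, ← card_eq_sum_card_fiberwise fun i _ ↦ mem_univ (σ i), card_univ]

lemma Orthonormal.two_mul_card_sub_le_sum_iInf_norm_sub_sq [Nonempty κ] {v : ι → E} (hv : Orthonormal ℝ v)
    {c : κ → E} (hc : ∀ j, ‖c j‖ = 1) :
    2 * Fintype.card ι - 2 * √(Fintype.card κ * Fintype.card ι) ≤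
      ∑ i, ⨅ j, ‖v i - c j‖ ^ 2 := by
  choose σ hσ using fun i ↦ exists_eq_ciInf_of_finite (f := fun j ↦ ‖v i - c j‖ ^ 2)
  have cost : ∀ i, ‖v i - c (σ i)‖ ^ 2 = 2 - 2 * inner ℝ (v i) (c (σ i)) := fun i ↦ by
    rw [norm_sub_sq_real, hv.1 i, hc]
    ring
  have := hv.sum_inner_comp_le_sqrt (fun j ↦ (hc j).le) σ
  simp only [← hσ, cost, sum_sub_distrib, sum_const, card_univ, nsmul_eq_mul, ← mul_sum]
  linarith

end

/-- Any clustering of the first `d` standard basis vectors of `ℝ^{2d}`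
with `k` unit-norm centers has cost at least `2d - 2√(dk)`. -/
theorem kmeans_unit_centers_lower_bound
    (d k : ℕ) (hk : 1 ≤ k)
    (c : Fin k → EuclideanSpace ℝ (Fin (2 * d)))
    (hc : ∀ j, ‖c j‖ = 1) :
    (2 : ℝ) * d - 2 * Real.sqrt (d * k) ≤
      ∑ i : Fin d, ⨅ j : Fin k,
        ‖EuclideanSpace.single (Fin.castLE (by omega) i) (1 : ℝ) - c j‖ ^ 2 := by
  have : Nonempty (Fin k) := ⟨⟨0, hk⟩⟩
  have hv := (EuclideanSpace.orthonormal_single (𝕜 := ℝ) (ι := Fin (2 * d))).comp _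
    (Fin.castLE_injective (by omega : d ≤ 2 * d))
  simpa [mul_comm (k : ℝ)] using hv.two_mul_card_sub_le_sum_iInf_norm_sub_sq hc
end

section
/- Let d ≥ 1 and let r_1, …, r_ℓ ∈ ℝ^{2d} and w_1, …, w_ℓ ∈ ℝ_{>0}. Then there exists a vector v ∈ ℝ^{2d} with ‖v‖ = 1 such that ∑_{i=1}^ℓ w_i·|⟨r_i, v⟩| ≥ (∑_{i=1}^ℓ w_i·‖r_i‖)/√ℓ. -/
open scoped RealInnerProductSpace

open Finset in
lemma exists_signs_sum_sq_le {E : Type*} [NormedAddCommGroup E] [InnerProductSpace ℝ E]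
    {ι : Type*} [DecidableEq ι] (s : Finset ι) (x : ι → E) :
    ∃ ε : ι → ℝ, (∀ i, ε i = 1 ∨ ε i = -1) ∧
      ∑ i ∈ s, ‖x i‖ ^ 2 ≤ ‖∑ i ∈ s, ε i • x i‖ ^ 2 := by
  induction s using Finset.induction_on with
  | empty => exact ⟨fun _ => 1, fun _ => Or.inl rfl, by simp⟩
  | @insert a s ha ih =>
    obtain ⟨ε, hε, hle⟩ := ih
    set u : E := ∑ i ∈ s, ε i • x i with hu
    set c : ℝ := if 0 ≤ ⟪x a, u⟫ then 1 else -1 with hc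
    refine ⟨Function.update ε a c, ?_, ?_⟩
    · intro i
      rcases eq_or_ne i a with rfl | h
      · simp only [Function.update_self, hc]
        split_ifs <;> simp
      · simp only [Function.update_of_ne h]; exact hε i
    · rw [Finset.sum_insert ha, Finset.sum_insert ha, Function.update_self]
      have hsum : ∑ i ∈ s, Function.update ε a c i • x i = u := by
        rw [hu]
        refine Finset.sum_congr rfl fun i hi => ?_
        rw [Function.update_of_ne (fun h : i = a => ha (h ▸ hi))]
      rw [hsum]
      have hnorm : ‖c • x a + u‖ ^ 2 = ‖c • x a‖ ^ 2 + 2 * ⟪c • x a, u⟫ + ‖u‖ ^ 2 := by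
        rw [@norm_add_sq_real]
      have hcx : ‖c • x a‖ = ‖x a‖ := by
        rw [norm_smul]
        have : ‖c‖ = 1 := by rw [hc]; split_ifs <;> simp
        rw [this, one_mul]
      have hcross : 0 ≤ ⟪c • x a, u⟫ := by
        rw [real_inner_smul_left, hc]
        split_ifs with h
        · simpa using h
        · nlinarith [le_of_not_ge h]
      rw [hnorm, hcx]
      nlinarith
  
/-- For weighted points in `ℝ^{2d}` there is a unit vector `v` with
`∑ wᵢ |⟨rᵢ, v⟩| ≥ (∑ wᵢ ‖rᵢ‖) / √ℓ`. -/
theorem exists_unit_vector_large_inner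
    (d ℓ : ℕ) (hd : 0 < d)
    (r : Fin ℓ → EuclideanSpace ℝ (Fin (2 * d)))
    (w : Fin ℓ → ℝ) (hw : ∀ i, 0 < w i) :
    ∃ v : EuclideanSpace ℝ (Fin (2 * d)), ‖v‖ = 1 ∧
      (∑ i, w i * ‖r i‖) / Real.sqrt ℓ ≤ ∑ i, w i * |⟪r i, v⟫| := by
  -- a default unit vector
  have h2d : 0 < 2 * d := by omega
  set e : EuclideanSpace ℝ (Fin (2 * d)) := EuclideanSpace.single ⟨0, h2d⟩ (1 : ℝ) with he
  have hene : ‖e‖ = 1 := by simp [he]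
  set S : ℝ := ∑ i, w i * ‖r i‖ with hS
  have hSnonneg : 0 ≤ S := Finset.sum_nonneg fun i _ =>
    mul_nonneg (hw i).le (norm_nonneg _)
  rcases eq_or_lt_of_le hSnonneg with hS0 | hSpos
  · refine ⟨e, hene, ?_⟩
    rw [← hS0]
    rw [zero_div]
    exact Finset.sum_nonneg fun i _ => mul_nonneg (hw i).le (abs_nonneg _)
  -- main case
  obtain ⟨ε, hε, hle⟩ := exists_signs_sum_sq_le (Finset.univ : Finset (Fin ℓ))
    (fun i => w i • r i)
  set u : EuclideanSpace ℝ (Fin (2 * d)) := ∑ i, ε i • w i • r i with hu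
  have hQ : 0 < ∑ i, (w i * ‖r i‖) ^ 2 := by
    have hℓpos : S ≠ 0 := ne_of_gt hSpos
    by_contra h
    push_neg at h
    have hzero : ∑ i, (w i * ‖r i‖) ^ 2 = 0 :=
      le_antisymm h (Finset.sum_nonneg fun i _ => sq_nonneg _)
    have : ∀ i ∈ Finset.univ, (w i * ‖r i‖) ^ 2 = 0 :=
      (Finset.sum_eq_zero_iff_of_nonneg fun i _ => sq_nonneg _).1 hzero
    have hSz : S = 0 := Finset.sum_eq_zero fun i hi => by
      have := this i hi
      nlinarith [this]
    exact hℓpos hSz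
  have hnorm_sq : ∑ i, (w i * ‖r i‖) ^ 2 ≤ ‖u‖ ^ 2 := by
    calc ∑ i, (w i * ‖r i‖) ^ 2 = ∑ i, ‖w i • r i‖ ^ 2 := by
          refine Finset.sum_congr rfl fun i _ => ?_
          rw [norm_smul, Real.norm_eq_abs, abs_of_pos (hw i)]
      _ ≤ ‖u‖ ^ 2 := hle
  have hupos : 0 < ‖u‖ := by
    by_contra h
    push_neg at h
    have : ‖u‖ = 0 := le_antisymm h (norm_nonneg _)
    rw [this] at hnorm_sq
    nlinarith
  refine ⟨‖u‖⁻¹ • u, ?_, ?_⟩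
  · rw [norm_smul, norm_inv, norm_norm, inv_mul_cancel₀ (ne_of_gt hupos)]
  -- lower bound: ∑ w i |⟪r i, v⟫| ≥ ⟪u, v⟫ = ‖u‖
  have key : ‖u‖ ≤ ∑ i, w i * |⟪r i, ‖u‖⁻¹ • u⟫| := by
    have h1 : ⟪u, ‖u‖⁻¹ • u⟫ = ‖u‖ := by
      rw [real_inner_smul_right, real_inner_self_eq_norm_sq]
      field_simp
    have h2 : ⟪u, ‖u‖⁻¹ • u⟫ = ∑ i, ε i * (w i * ⟪r i, ‖u‖⁻¹ • u⟫) := by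
      rw [hu, sum_inner]
      refine Finset.sum_congr rfl fun i _ => ?_
      rw [real_inner_smul_left, real_inner_smul_left]
    calc ‖u‖ = ∑ i, ε i * (w i * ⟪r i, ‖u‖⁻¹ • u⟫) := by rw [← h2, h1]
      _ ≤ ∑ i, w i * |⟪r i, ‖u‖⁻¹ • u⟫| := ?_
    refine Finset.sum_le_sum fun i _ => ?_
    have hεi : |ε i| = 1 := by rcases hε i with h | h <;> simp [h]
    calc ε i * (w i * ⟪r i, ‖u‖⁻¹ • u⟫) ≤ |ε i * (w i * ⟪r i, ‖u‖⁻¹ • u⟫)| := le_abs_self _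
      _ = w i * |⟪r i, ‖u‖⁻¹ • u⟫| := by
          rw [abs_mul, hεi, one_mul, abs_mul, abs_of_pos (hw i)]
  -- Cauchy-Schwarz: S ≤ √ℓ * ‖u‖
  have hCS : S ^ 2 ≤ (ℓ : ℝ) * ∑ i, (w i * ‖r i‖) ^ 2 := by
    have := Finset.sum_mul_sq_le_sq_mul_sq Finset.univ (fun _ : Fin ℓ => (1 : ℝ))
      (fun i => w i * ‖r i‖)
    simpa [hS, Finset.card_univ] using this
  have hℓpos : 0 < (ℓ : ℝ) := by
    rcases Nat.eq_zero_or_pos ℓ with h | h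
    · subst h; simp [hS] at hSpos
    · exact_mod_cast h
  have hsqrtℓ : 0 < Real.sqrt ℓ := Real.sqrt_pos.2 hℓpos
  have hfinal : S / Real.sqrt ℓ ≤ ‖u‖ := by
    rw [div_le_iff₀ hsqrtℓ]
    have hS2 : S ^ 2 ≤ (Real.sqrt ℓ * ‖u‖) ^ 2 := by
      calc S ^ 2 ≤ (ℓ : ℝ) * ∑ i, (w i * ‖r i‖) ^ 2 := hCS
        _ ≤ (ℓ : ℝ) * ‖u‖ ^ 2 := by
            exact mul_le_mul_of_nonneg_left hnorm_sq hℓpos.le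
        _ = (Real.sqrt ℓ * ‖u‖) ^ 2 := by
            rw [mul_pow, Real.sq_sqrt hℓpos.le]
    have hpos : 0 ≤ Real.sqrt ℓ * ‖u‖ := mul_nonneg hsqrtℓ.le (norm_nonneg _)
    nlinarith
  exact hfinal.trans key
end

section
/- Let 0 < ε < 1/2, let d and k be positive integers, and let P = {e_1, …, e_d} ⊂ ℝ^{2d}. Suppose r_1, …, r_t ∈ ℝ^{2d} with weights w_1, …, w_t ∈ ℝ_{>0} and offset Δ ∈ ℝ form an ε-coreset with offset for k-means on P, and t < d. Then |Δ + ∑_{i=1}^t w_i·(‖r_i‖² + 1) − 2d| ≤ 2εd. -/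
open scoped RealInnerProductSpace


/-- The `i`-th standard basis vector of `ℝ^{2d}` (for `i < d`). -/
noncomputable def stdBasisPt (d : ℕ) (i : Fin d) : EuclideanSpace ℝ (Fin (2 * d)) :=
  EuclideanSpace.single (Fin.castLE (by omega) i) 1

/-- The `k`-means cost of the point set `P = {e_1, …, e_d} ⊂ ℝ^{2d}` in the set of
centers `S`: `cost(P, S) = ∑_{i} min_{s ∈ S} ‖e_i − s‖²`. -/
noncomputable def kmeansCostP (d : ℕ) (S : Finset (EuclideanSpace ℝ (Fin (2 * d)))) : ℝ :=
  ∑ i : Fin d, ⨅ s : S, ‖stdBasisPt d i - (s : EuclideanSpace ℝ (Fin (2 * d)))‖ ^ 2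

/-- `r, w, Δ` form an `ε`-coreset with offset for `k`-means on `P = {e_1,…,e_d} ⊂ ℝ^{2d}`. -/
def IsKMeansCoreset (d k t : ℕ) (ε : ℝ) (r : Fin t → EuclideanSpace ℝ (Fin (2 * d)))
    (w : Fin t → ℝ) (Δ : ℝ) : Prop :=
  ∀ S : Finset (EuclideanSpace ℝ (Fin (2 * d))), S.card = k →
    |kmeansCostP d S -
        (Δ + ∑ i, w i * ⨅ s : S, ‖r i - (s : EuclideanSpace ℝ (Fin (2 * d)))‖ ^ 2)| ≤
      ε * kmeansCostP d S

/-- for an `ε`-coreset with offset of `{e_1,…,e_d}` with `t < d` points,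
`Δ + ∑ wᵢ(‖rᵢ‖² + 1)` lies within `2εd` of `2d`. -/
theorem coreset_offset_norm_sum
    (d k t : ℕ) (hd : 0 < d) (hk : 0 < k) (ε : ℝ) (hε0 : 0 < ε) (hε : ε < 1 / 2)
    (r : Fin t → EuclideanSpace ℝ (Fin (2 * d))) (w : Fin t → ℝ)
    (hw : ∀ i, 0 < w i) (Δ : ℝ)
    (hcore : IsKMeansCoreset d k t ε r w Δ) (ht : t < d) :
    |Δ + (∑ i, w i * (‖r i‖ ^ 2 + 1)) - 2 * d| ≤ 2 * ε * d := by
  classical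
  -- span of all the r i's and all standard basis points
  set g : (Fin t ⊕ Fin d) → EuclideanSpace ℝ (Fin (2 * d)) := Sum.elim r (stdBasisPt d) with hg
  set V : Submodule ℝ (EuclideanSpace ℝ (Fin (2 * d))) := Submodule.span ℝ (Set.range g) with hV
  have hVfr : Module.finrank ℝ V < Module.finrank ℝ (EuclideanSpace ℝ (Fin (2 * d))) := by
    have h1 : Module.finrank ℝ V ≤ Fintype.card (Fin t ⊕ Fin d) :=
      finrank_range_le_card g
    have h2 : Module.finrank ℝ (EuclideanSpace ℝ (Fin (2 * d))) = 2 * d := by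
      simp [finrank_euclideanSpace]
    simp only [Fintype.card_sum, Fintype.card_fin] at h1
    omega
  have hVne : V ≠ ⊤ := by
    intro h
    rw [h, finrank_top] at hVfr
    omega
  have hbot : Vᗮ ≠ ⊥ := by
    intro h
    exact hVne (Submodule.orthogonal_eq_bot_iff.mp h)
  obtain ⟨v, hvV, hv0⟩ := Submodule.exists_mem_ne_zero_of_ne_bot hbot
  set u : EuclideanSpace ℝ (Fin (2 * d)) := ‖v‖⁻¹ • v with hu
  have hu1 : ‖u‖ = 1 := norm_smul_inv_norm hv0
  have hu0 : u ≠ 0 := by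
    intro h; rw [h, norm_zero] at hu1; norm_num at hu1
  have huorth : ∀ x ∈ V, ⟪x, u⟫ = 0 := by
    intro x hx
    have := hvV x hx
    rw [hu, real_inner_smul_right, this, mul_zero]
  have hur : ∀ i, ⟪r i, u⟫ = 0 := fun i =>
    huorth _ (Submodule.subset_span ⟨Sum.inl i, rfl⟩)
  have hue : ∀ i, ⟪stdBasisPt d i, u⟫ = 0 := fun i =>
    huorth _ (Submodule.subset_span ⟨Sum.inr i, rfl⟩)
  -- the centers
  set c : Fin k → ℝ := fun j => if j.val = 0 then -1 else j.val with hc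
  have hc1 : ∀ j, 1 ≤ (c j) ^ 2 := by
    intro j
    by_cases h : j.val = 0
    · simp [hc, h]
    · have : (1 : ℝ) ≤ (j.val : ℝ) := by exact_mod_cast Nat.one_le_iff_ne_zero.mpr h
      simp only [hc, if_neg h]
      nlinarith
  have hcinj : Function.Injective c := by
    intro a b hab
    simp only [hc] at hab
    by_cases ha : a.val = 0 <;> by_cases hb : b.val = 0
    · exact Fin.ext (by omega)
    · rw [if_pos ha, if_neg hb] at hab
      have : (1:ℝ) ≤ (b.val : ℝ) := by exact_mod_cast Nat.one_le_iff_ne_zero.mpr hb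
      linarith
    · rw [if_neg ha, if_pos hb] at hab
      have : (1:ℝ) ≤ (a.val : ℝ) := by exact_mod_cast Nat.one_le_iff_ne_zero.mpr ha
      linarith
    · rw [if_neg ha, if_neg hb] at hab
      exact Fin.ext (by exact_mod_cast hab)
  set f : Fin k → EuclideanSpace ℝ (Fin (2 * d)) := fun j => c j • u with hf
  have hfinj : Function.Injective f := fun a b hab =>
    hcinj (smul_left_injective ℝ hu0 hab)
  set S : Finset (EuclideanSpace ℝ (Fin (2 * d))) := Finset.image f Finset.univ with hS
  have hScard : S.card = k := by
    rw [hS, Finset.card_image_of_injective _ hfinj, Finset.card_univ, Fintype.card_fin]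
  have hSne : Nonempty S := by
    have : f ⟨0, hk⟩ ∈ S := Finset.mem_image_of_mem _ (Finset.mem_univ _)
    exact ⟨⟨_, this⟩⟩
  -- distance computation
  have hdist : ∀ (p : EuclideanSpace ℝ (Fin (2 * d))), ⟪p, u⟫ = 0 → ∀ j : Fin k,
      ‖p - f j‖ ^ 2 = ‖p‖ ^ 2 + (c j) ^ 2 := by
    intro p hp j
    rw [hf]
    rw [norm_sub_sq_real, real_inner_smul_right, hp, norm_smul]
    simp [hu1, mul_pow, abs_sq, sq_abs]
  have hinf : ∀ (p : EuclideanSpace ℝ (Fin (2 * d))), ⟪p, u⟫ = 0 →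
      (⨅ s : S, ‖p - (s : EuclideanSpace ℝ (Fin (2 * d)))‖ ^ 2) = ‖p‖ ^ 2 + 1 := by
    intro p hp
    apply le_antisymm
    · have hmem : f ⟨0, hk⟩ ∈ S := Finset.mem_image_of_mem _ (Finset.mem_univ _)
      have := ciInf_le (f := fun s : S => ‖p - (s : EuclideanSpace ℝ (Fin (2 * d)))‖ ^ 2)
        (Set.Finite.bddBelow (Set.finite_range _)) ⟨_, hmem⟩
      rw [hdist p hp ⟨0, hk⟩] at this
      simpa [hc] using this
    · apply le_ciInf
      intro ⟨s, hs⟩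
      obtain ⟨j, _, rfl⟩ := Finset.mem_image.mp hs
      rw [hdist p hp j]
      have := hc1 j
      linarith
  -- cost = 2d
  have hcost : kmeansCostP d S = 2 * d := by
    unfold kmeansCostP
    have : ∀ i : Fin d, (⨅ s : S, ‖stdBasisPt d i - (s : EuclideanSpace ℝ (Fin (2 * d)))‖ ^ 2) = 2 := by
      intro i
      rw [hinf _ (hue i)]
      have : ‖stdBasisPt d i‖ = 1 := by
        simp [stdBasisPt, EuclideanSpace.norm_single]
      rw [this]; norm_num
    rw [Finset.sum_congr rfl (fun i _ => this i)]
    simp [mul_comm]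
  have hrdist : ∀ i, (⨅ s : S, ‖r i - (s : EuclideanSpace ℝ (Fin (2 * d)))‖ ^ 2) = ‖r i‖ ^ 2 + 1 :=
    fun i => hinf _ (hur i)
  have := hcore S hScard
  rw [hcost] at this
  have hsum : (∑ i, w i * ⨅ s : S, ‖r i - (s : EuclideanSpace ℝ (Fin (2 * d)))‖ ^ 2)
      = ∑ i, w i * (‖r i‖ ^ 2 + 1) :=
    Finset.sum_congr rfl fun i _ => by rw [hrdist i]
  rw [hsum] at this
  rw [abs_sub_comm] at this
  calc |Δ + (∑ i, w i * (‖r i‖ ^ 2 + 1)) - 2 * d|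
      = |Δ + (∑ i, w i * (‖r i‖ ^ 2 + 1)) - 2 * ↑d| := rfl
    _ ≤ 2 * ε * d := by linarith [this, abs_nonneg (Δ + (∑ i, w i * (‖r i‖ ^ 2 + 1)) - 2 * (d:ℝ))]
end

section
/- Let 0 < ε < 1/2 and let k be a positive even integer such that q := 1/(36ε²) is a positive integer that is a power of 2, and set d := k·q = k/(36ε²). Let P = {e_1, …, e_d} ⊂ ℝ^{2d}. Suppose r_1, …, r_t ∈ ℝ^{2d} with weights w_1, …, w_t ∈ ℝ_{>0} and offset Δ ∈ ℝ form an ε-coreset with offset for k-means on P, and t < d. Then ∑_{i=1}^t w_i·‖r_i‖ ≥ d/6. -/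
open Finset Function
open scoped RealInnerProductSpace

lemma le_of_forall_mul_sq_le {a b c e : ℝ}
    (h : ∀ R : ℝ, 0 ≤ R → a * R ^ 2 ≤ b + c * R + e * R ^ 2) : a ≤ e := by
  by_contra! hlt
  have hδ : 0 < a - e := sub_pos.2 hlt
  set R := (|b| + |c|) / (a - e) + 1
  have hR1 : 1 ≤ R := le_add_of_nonneg_left (by positivity)
  have hδR : (a - e) * R = |b| + |c| + (a - e) := by
    simp only [R]
    field_simp
  have h1 : (a - e) * R ^ 2 ≤ b + c * R := by linarith [h R (by linarith)]
  have h2 : b + c * R ≤ |b| * R + |c| * R :=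
    add_le_add ((le_abs_self b).trans (le_mul_of_one_le_right (abs_nonneg b) hR1))
      (mul_le_mul_of_nonneg_right (le_abs_self c) (by linarith))
  have h3 : (a - e) * R ^ 2 = (|b| + |c| + (a - e)) * R := by rw [sq, ← mul_assoc, hδR]
  nlinarith

lemma mul_sqrt_eq_one_div_six {ε q : ℝ} (hε : 0 < ε) (hq : q = 1 / (36 * ε ^ 2)) :
    ε * √q = 1 / 6 := by
  rw [hq, show 1 / (36 * ε ^ 2) = (1 / (6 * ε)) ^ 2 by ring, Real.sqrt_sq (by positivity)]
  field_simp

section Walsh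

variable {n : ℕ}

noncomputable def walshChar (m : Fin n → ZMod 2) : AddChar (Fin n → ZMod 2) ℝ :=
  (AddChar.zmodChar 2 (by norm_num : (-1 : ℝ) ^ 2 = 1)).compAddMonoidHom
    (AddMonoidHom.mk' (m ⬝ᵥ ·) (dotProduct_add m))

lemma walshChar_apply (m y : Fin n → ZMod 2) : walshChar m y = (-1) ^ (m ⬝ᵥ y).val := by
  simp [walshChar, AddChar.zmodChar_apply]

lemma walshChar_eq_one_or (m y : Fin n → ZMod 2) : walshChar m y = 1 ∨ walshChar m y = -1 := by
  rw [walshChar_apply]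
  exact neg_one_pow_eq_or ℝ _

lemma walshChar_mul_walshChar (m m' y : Fin n → ZMod 2) :
    walshChar m y * walshChar m' y = walshChar (m + m') y := by
  simp only [walshChar, AddChar.compAddMonoidHom_apply, AddMonoidHom.mk'_apply, add_dotProduct,
    AddChar.map_add_eq_mul]

lemma walshChar_eq_zero_iff (m : Fin n → ZMod 2) : walshChar m = 0 ↔ m = 0 := by
  refine ⟨fun h => ?_, fun h => ?_⟩
  · by_contra hm
    obtain ⟨i, hi⟩ := Function.ne_iff.1 hm
    have h1 : m i = 1 := (by decide : ∀ a : ZMod 2, a ≠ 0 → a = 1) _ hi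
    have := DFunLike.congr_fun h (Pi.single i 1)
    rw [walshChar_apply, dotProduct_single, h1, AddChar.zero_apply] at this
    norm_num [ZMod.val_one] at this
  · ext y
    simp [walshChar_apply, h]

lemma sum_walshChar (m : Fin n → ZMod 2) :
    ∑ y, walshChar m y = if m = 0 then 2 ^ n else 0 := by
  classical
  rw [AddChar.sum_eq_ite]
  simp [walshChar_eq_zero_iff]

lemma sum_walshChar_mul_walshChar (m m' : Fin n → ZMod 2) :
    ∑ y, walshChar m y * walshChar m' y = if m = m' then 2 ^ n else 0 := by
  simp only [walshChar_mul_walshChar, sum_walshChar, funext_iff, Pi.add_apply, Pi.zero_apply,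
    CharTwo.add_eq_zero]

end Walsh

section MinSqDist

variable {E : Type*} [SeminormedAddCommGroup E]

noncomputable def minSqDist (S : Finset E) (x : E) : ℝ := ⨅ s : S, ‖x - s‖ ^ 2

lemma minSqDist_le {S : Finset E} {x s : E} (hs : s ∈ S) : minSqDist S x ≤ ‖x - s‖ ^ 2 :=
  ciInf_le (Set.finite_range _).bddBelow (⟨s, hs⟩ : S)

lemma le_minSqDist {S : Finset E} {x : E} {c : ℝ} (hS : S.Nonempty)
    (h : ∀ s ∈ S, c ≤ ‖x - s‖ ^ 2) : c ≤ minSqDist S x :=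
  have : Nonempty S := hS.to_subtype
  le_ciInf fun s => h s s.2

lemma minSqDist_le_sq_norm_add {S : Finset E} {x s : E} (hs : s ∈ S) :
    minSqDist S x ≤ (‖x‖ + ‖s‖) ^ 2 :=
  (minSqDist_le hs).trans (pow_le_pow_left₀ (norm_nonneg _) (norm_sub_le x s) 2)

noncomputable def coresetCost {ι : Type*} [Fintype ι] (r : ι → E) (w : ι → ℝ) (Δ : ℝ)
    (S : Finset E) : ℝ :=
  Δ + ∑ i, w i * minSqDist S (r i)

end MinSqDist

section FarCenters

variable {E : Type*} [NormedAddCommGroup E] [InnerProductSpace ℝ E]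

lemma norm_sub_smul_sq_of_inner_eq_zero {x u : E} (hu : ‖u‖ = 1) (h : ⟪x, u⟫ = 0) (a : ℝ) :
    ‖x - a • u‖ ^ 2 = ‖x‖ ^ 2 + a ^ 2 := by
  rw [norm_sub_sq_real, inner_smul_right, h, norm_smul, hu, Real.norm_eq_abs, mul_one, sq_abs]
  ring

lemma Orthonormal.injective_smul {ι : Type*} {u : ι → E} (hu : Orthonormal ℝ u) {a : ι → ℝ}
    (ha : ∀ i j, a i = 0 → a j = 0 → i = j) : Injective fun i => a i • u i := by
  classical
  intro i j hij
  have key : ∀ i j, a i • u i = a j • u j → i ≠ j → a i = 0 := fun i j h hne => by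
    simpa [inner_smul_right, real_inner_self_eq_norm_sq, hu.1 i, hu.2 hne] using
      congrArg (⟪u i, ·⟫) h
  by_contra hne
  exact hne (ha i j (key i j hij hne) (key j i hij.symm (Ne.symm hne)))

open Classical in
noncomputable def farCenters {k : ℕ} (u : Fin k → E) (R : ℝ) : Finset E :=
  univ.image fun j : Fin k => (R + (j : ℕ)) • u j

variable {k : ℕ} {u : Fin k → E} {R : ℝ}

lemma card_farCenters (hu : Orthonormal ℝ u) (hR : 0 ≤ R) : (farCenters u R).card = k := by
  classical
  refine (card_image_of_injective _ (hu.injective_smul fun i j hi hj => ?_)).trans (card_fin k)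
  have hi' : (i : ℝ) = 0 := by linarith [(i : ℕ).cast_nonneg (α := ℝ)]
  have hj' : (j : ℝ) = 0 := by linarith [(j : ℕ).cast_nonneg (α := ℝ)]
  exact Fin.ext (by exact_mod_cast hi'.trans hj'.symm)

lemma smul_mem_farCenters (hk : 0 < k) : R • u ⟨0, hk⟩ ∈ farCenters u R := by
  classical
  exact mem_image.2 ⟨⟨0, hk⟩, mem_univ _, by simp⟩

lemma minSqDist_farCenters (hu : Orthonormal ℝ u) (hk : 0 < k) (hR : 0 ≤ R) {x : E}
    (hx : ∀ j, ⟪x, u j⟫ = 0) : minSqDist (farCenters u R) x = ‖x‖ ^ 2 + R ^ 2 := by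
  refine le_antisymm ?_ (le_minSqDist ⟨_, smul_mem_farCenters hk⟩ ?_)
  · simpa [norm_sub_smul_sq_of_inner_eq_zero (hu.1 _) (hx _)] using
      minSqDist_le (x := x) (smul_mem_farCenters (u := u) (R := R) hk)
  · classical
    intro s hs
    obtain ⟨j, -, rfl⟩ := mem_image.1 hs
    rw [norm_sub_smul_sq_of_inner_eq_zero (hu.1 j) (hx j)]
    nlinarith [(j : ℕ).cast_nonneg (α := ℝ)]

end FarCenters

section Hadamard

variable {E : Type*} [NormedAddCommGroup E] [InnerProductSpace ℝ E]

lemma le_minSqDist_image_of_norm_eq_one {κ : Type*} [Fintype κ] [Nonempty κ] [DecidableEq E]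
    {c : κ → E} (hc : ∀ g, ‖c g‖ = 1) (x : E) :
    ‖x‖ ^ 2 + 1 - 2 * √(∑ g, ⟪c g, x⟫ ^ 2) ≤ minSqDist (univ.image c) x := by
  refine le_minSqDist (univ_nonempty.image c) fun s hs => ?_
  obtain ⟨g, -, rfl⟩ := mem_image.1 hs
  have hle : ⟪c g, x⟫ ≤ √(∑ g, ⟪c g, x⟫ ^ 2) :=
    (le_abs_self _).trans
      (Real.abs_le_sqrt (single_le_sum (f := fun g => ⟪c g, x⟫ ^ 2)
        (fun _ _ => sq_nonneg _) (mem_univ g)))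
  rw [norm_sub_sq_real, hc g, real_inner_comm]
  linarith

lemma Orthonormal.sum_sqrt_sum_inner_sq_le {ι κ : Type*} [Fintype ι] [Fintype κ]
    {v : ι × κ → E} (hv : Orthonormal ℝ v) (x : E) :
    ∑ a, √(∑ b, ⟪v (a, b), x⟫ ^ 2) ≤ √(Fintype.card ι) * ‖x‖ := by
  have hsq : ∑ a, √(∑ b, ⟪v (a, b), x⟫ ^ 2) ^ 2 ≤ ‖x‖ ^ 2 := by
    simp only [Real.sq_sqrt (sum_nonneg fun _ _ => sq_nonneg _), ← Fintype.sum_prod_type']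
    simpa only [Real.norm_eq_abs, sq_abs] using hv.sum_inner_products_le (s := univ) x
  rw [← Real.sqrt_sq (norm_nonneg x), ← Real.sqrt_mul (Nat.cast_nonneg _)]
  refine Real.le_sqrt_of_sq_le ?_
  calc (∑ a, √(∑ b, ⟪v (a, b), x⟫ ^ 2)) ^ 2
      ≤ Fintype.card ι * ∑ a, √(∑ b, ⟪v (a, b), x⟫ ^ 2) ^ 2 := sq_sum_le_card_mul_sum_sq
    _ ≤ Fintype.card ι * ‖x‖ ^ 2 := by gcongr

variable {k n : ℕ} {e : Fin k × (Fin n → ZMod 2) → E}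

noncomputable def hadamardCoeff (m : Fin n → ZMod 2) (g : Fin k)
    (p : Fin k × (Fin n → ZMod 2)) : ℝ :=
  if p.1 = g then walshChar m p.2 / √(2 ^ n) else 0

noncomputable def hadamardCenter (e : Fin k × (Fin n → ZMod 2) → E) (m : Fin n → ZMod 2)
    (g : Fin k) : E :=
  ∑ p, hadamardCoeff m g p • e p

open Classical in
noncomputable def hadamardCenters (e : Fin k × (Fin n → ZMod 2) → E)
    (m : Fin n → ZMod 2) : Finset E :=
  univ.image (hadamardCenter e m)

lemma inner_hadamardCenter (he : Orthonormal ℝ e) (p : Fin k × (Fin n → ZMod 2))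
    (m : Fin n → ZMod 2) (g : Fin k) : ⟪e p, hadamardCenter e m g⟫ = hadamardCoeff m g p :=
  he.inner_right_fintype _ p

lemma orthonormal_hadamardCenter (he : Orthonormal ℝ e) :
    Orthonormal ℝ fun x : (Fin n → ZMod 2) × Fin k => hadamardCenter e x.1 x.2 := by
  rw [orthonormal_iff_ite]
  rintro ⟨m, g⟩ ⟨m', g'⟩
  have hpow : √(2 ^ n : ℝ) * √(2 ^ n) = 2 ^ n := Real.mul_self_sqrt (by positivity)
  simp only [hadamardCenter, he.inner_sum, conj_trivial]
  simp only [hadamardCoeff, Fintype.sum_prod_type, ite_mul, mul_ite, zero_mul, mul_zero,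
    div_mul_div_comm, hpow]
  rcases eq_or_ne g g' with rfl | hg
  · simp [← sum_div, sum_walshChar_mul_walshChar, apply_ite (· / (2 ^ n : ℝ))]
  · simp [hg, hg.symm]

lemma card_hadamardCenters (he : Orthonormal ℝ e) (m : Fin n → ZMod 2) :
    (hadamardCenters e m).card = k := by
  classical
  exact (card_image_of_injective _
    ((orthonormal_hadamardCenter he).linearIndependent.injective.comp
      (Prod.mk_right_injective m))).trans (card_fin k)

lemma sq_dist_hadamardCenter (he : Orthonormal ℝ e) (p : Fin k × (Fin n → ZMod 2))
    (m : Fin n → ZMod 2) (g : Fin k) :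
    ‖e p - hadamardCenter e m g‖ ^ 2 = 2 - 2 * hadamardCoeff m g p := by
  rw [norm_sub_sq_real, inner_hadamardCenter he, he.1 p,
    (orthonormal_hadamardCenter he).1 (m, g)]
  ring

lemma minSqDist_hadamardCenters_le (he : Orthonormal ℝ e) (hk : 2 ≤ k)
    (p : Fin k × (Fin n → ZMod 2)) (m : Fin n → ZMod 2) :
    minSqDist (hadamardCenters e m) (e p) ≤ 2 - (walshChar m p.2 + 1) / √(2 ^ n) := by
  classical
  have hmem : ∀ g, hadamardCenter e m g ∈ hadamardCenters e m := fun g =>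
    mem_image_of_mem _ (mem_univ g)
  rcases walshChar_eq_one_or m p.2 with h | h
  · refine (minSqDist_le (hmem p.1)).trans_eq ?_
    rw [sq_dist_hadamardCenter he, hadamardCoeff, if_pos rfl, h]
    ring
  · have : Nontrivial (Fin k) := Fin.nontrivial_iff_two_le.2 hk
    obtain ⟨g, hg⟩ := exists_ne p.1
    refine (minSqDist_le (hmem g)).trans_eq ?_
    rw [sq_dist_hadamardCenter he, hadamardCoeff, if_neg hg.symm, h]
    ring

lemma sum_sum_minSqDist_hadamardCenters_le (he : Orthonormal ℝ e) (hk : 2 ≤ k) :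
    ∑ m, ∑ p, minSqDist (hadamardCenters e m) (e p) ≤ k * 2 ^ n * (2 * 2 ^ n - √(2 ^ n)) := by
  have hs : √(2 ^ n : ℝ) * √(2 ^ n) = 2 ^ n := Real.mul_self_sqrt (by positivity)
  calc ∑ m, ∑ p, minSqDist (hadamardCenters e m) (e p)
      ≤ ∑ m : Fin n → ZMod 2, ∑ p : Fin k × (Fin n → ZMod 2),
          (2 - (walshChar m p.2 + 1) / √(2 ^ n)) :=
        sum_le_sum fun m _ => sum_le_sum fun p _ => minSqDist_hadamardCenters_le he hk p m
    _ = k * 2 ^ n * (2 * 2 ^ n - √(2 ^ n)) - k * √(2 ^ n) := by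
        simp only [Fintype.sum_prod_type, sum_const, card_univ, Fintype.card_fin, nsmul_eq_mul]
        have hχ : ∑ m : Fin n → ZMod 2, ∑ y, walshChar m y = 2 ^ n := by simp [sum_walshChar]
        rw [← mul_sum]
        simp only [add_div, ← sub_sub, sum_sub_distrib, ← sum_div, sum_const, card_univ,
          nsmul_eq_mul, hχ]
        simp only [Fintype.card_fun, ZMod.card, Fintype.card_fin, Nat.cast_pow, Nat.cast_ofNat]
        have hs0 : √(2 ^ n : ℝ) ≠ 0 := by positivity
        generalize √(2 ^ n : ℝ) = s at hs hs0 ⊢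
        rw [← hs]
        field_simp
        ring
    _ ≤ k * 2 ^ n * (2 * 2 ^ n - √(2 ^ n)) := sub_le_self _ (by positivity)

lemma sum_coresetCost_hadamardCenters_ge {ι : Type*} [Fintype ι] (he : Orthonormal ℝ e)
    (hk : 0 < k) (r : ι → E) {w : ι → ℝ} (hw : ∀ i, 0 ≤ w i) (Δ : ℝ) :
    2 ^ n * (Δ + ∑ i, w i * ‖r i‖ ^ 2 + ∑ i, w i) - 2 * √(2 ^ n) * ∑ i, w i * ‖r i‖ ≤
      ∑ m, coresetCost r w Δ (hadamardCenters e m) := by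
  classical
  have : Nonempty (Fin k) := ⟨⟨0, hk⟩⟩
  set B : ι → (Fin n → ZMod 2) → ℝ := fun i m => √(∑ g, ⟪hadamardCenter e m g, r i⟫ ^ 2)
  have hB : ∀ i, ∑ m, B i m ≤ √(2 ^ n) * ‖r i‖ := fun i => by
    simpa using (orthonormal_hadamardCenter he).sum_sqrt_sum_inner_sq_le (r i)
  have hpt : ∀ m i, ‖r i‖ ^ 2 + 1 - 2 * B i m ≤ minSqDist (hadamardCenters e m) (r i) :=
    fun m i => le_minSqDist_image_of_norm_eq_one
      (fun g => (orthonormal_hadamardCenter he).1 (m, g)) (r i)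
  calc 2 ^ n * (Δ + ∑ i, w i * ‖r i‖ ^ 2 + ∑ i, w i) - 2 * √(2 ^ n) * ∑ i, w i * ‖r i‖
      ≤ 2 ^ n * (Δ + ∑ i, w i * ‖r i‖ ^ 2 + ∑ i, w i) - 2 * ∑ i, w i * ∑ m, B i m := by
        have : ∑ i, w i * ∑ m, B i m ≤ √(2 ^ n) * ∑ i, w i * ‖r i‖ := by
          rw [mul_sum]
          refine sum_le_sum fun i _ => ?_
          rw [mul_left_comm]
          exact mul_le_mul_of_nonneg_left (hB i) (hw i)
        linarith
    _ = ∑ m, (Δ + ∑ i, w i * (‖r i‖ ^ 2 + 1 - 2 * B i m)) := by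
        simp only [mul_sub, mul_add, sum_add_distrib, sum_sub_distrib, sum_const, card_univ,
          nsmul_eq_mul, mul_sum, ← sum_mul]
        rw [sum_comm (γ := ι)]
        simp [mul_left_comm, ← mul_sum]
        ring
    _ ≤ ∑ m, coresetCost r w Δ (hadamardCenters e m) :=
        sum_le_sum fun m _ => add_le_add_right
          (sum_le_sum fun i _ => mul_le_mul_of_nonneg_left (hpt m i) (hw i)) Δ

end Hadamard

section Coreset

variable {d k t : ℕ} {ε Δ : ℝ} {r : Fin t → EuclideanSpace ℝ (Fin (2 * d))} {w : Fin t → ℝ}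

lemma kmeansCostP_eq (S : Finset (EuclideanSpace ℝ (Fin (2 * d)))) :
    kmeansCostP d S = ∑ i, minSqDist S (stdBasisPt d i) := rfl

lemma IsKMeansCoreset.le_coresetCost (h : IsKMeansCoreset d k t ε r w Δ)
    {S : Finset (EuclideanSpace ℝ (Fin (2 * d)))} (hS : S.card = k) :
    (1 - ε) * kmeansCostP d S ≤ coresetCost r w Δ S := by
  have := (abs_le.1 (h S hS)).2
  unfold coresetCost minSqDist
  linarith

lemma IsKMeansCoreset.coresetCost_le (h : IsKMeansCoreset d k t ε r w Δ)
    {S : Finset (EuclideanSpace ℝ (Fin (2 * d)))} (hS : S.card = k) :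
    coresetCost r w Δ S ≤ (1 + ε) * kmeansCostP d S := by
  have := (abs_le.1 (h S hS)).1
  unfold coresetCost minSqDist
  linarith

noncomputable def upperBasisPt (d : ℕ) (j : Fin d) : EuclideanSpace ℝ (Fin (2 * d)) :=
  EuclideanSpace.single ⟨d + j, by omega⟩ 1

lemma orthonormal_stdBasisPt : Orthonormal ℝ (stdBasisPt d) := by
  have h : stdBasisPt d = EuclideanSpace.basisFun (Fin (2 * d)) ℝ ∘ Fin.castLE (by omega) :=
    funext fun i => by simp [stdBasisPt]
  rw [h]
  exact (EuclideanSpace.basisFun _ ℝ).orthonormal.comp _ (Fin.castLE_injective _)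

lemma orthonormal_upperBasisPt : Orthonormal ℝ (upperBasisPt d) := by
  have h : upperBasisPt d = EuclideanSpace.basisFun (Fin (2 * d)) ℝ ∘
      fun j : Fin d => (⟨d + j, by omega⟩ : Fin (2 * d)) :=
    funext fun j => by simp [upperBasisPt]
  rw [h]
  exact (EuclideanSpace.basisFun _ ℝ).orthonormal.comp _ fun i j h => by
    simpa [Fin.ext_iff] using h

lemma inner_stdBasisPt_upperBasisPt (i j : Fin d) : ⟪stdBasisPt d i, upperBasisPt d j⟫ = 0 := by
  simp [stdBasisPt, upperBasisPt, EuclideanSpace.inner_single_left, Fin.ext_iff]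
  omega

lemma IsKMeansCoreset.farCenters_bound (h : IsKMeansCoreset d k t ε r w Δ) (hk : 0 < k)
    (hkd : k ≤ d) (hw : ∀ i, 0 ≤ w i) {R : ℝ} (hR : 0 ≤ R) :
    (1 - ε) * (d * (1 + R ^ 2)) ≤
      Δ + ∑ i, w i * ‖r i‖ ^ 2 + 2 * R * ∑ i, w i * ‖r i‖ + (∑ i, w i) * R ^ 2 := by
  set u := upperBasisPt d ∘ Fin.castLE hkd
  have hu : Orthonormal ℝ u := orthonormal_upperBasisPt.comp _ (Fin.castLE_injective hkd)
  have hcost : kmeansCostP d (farCenters u R) = d * (1 + R ^ 2) := by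
    simp [kmeansCostP_eq, orthonormal_stdBasisPt.1,
      minSqDist_farCenters hu hk hR fun j => inner_stdBasisPt_upperBasisPt _ _]
    ring
  have hnear : ‖R • u ⟨0, hk⟩‖ = R := by rw [norm_smul, hu.1, mul_one, Real.norm_of_nonneg hR]
  calc (1 - ε) * (d * (1 + R ^ 2)) ≤ coresetCost r w Δ (farCenters u R) :=
        hcost ▸ h.le_coresetCost (card_farCenters hu hR)
    _ ≤ Δ + ∑ i, w i * (‖r i‖ + R) ^ 2 := by
        refine add_le_add_right (sum_le_sum fun i _ => mul_le_mul_of_nonneg_left ?_ (hw i)) Δ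
        simpa only [hnear] using
          minSqDist_le_sq_norm_add (x := r i) (smul_mem_farCenters (u := u) (R := R) hk)
    _ = Δ + ∑ i, w i * ‖r i‖ ^ 2 + 2 * R * ∑ i, w i * ‖r i‖ + (∑ i, w i) * R ^ 2 := by
        have hexp : ∀ i, w i * (‖r i‖ + R) ^ 2 =
            w i * ‖r i‖ ^ 2 + 2 * R * (w i * ‖r i‖) + w i * R ^ 2 := fun i => by ring
        simp only [hexp, sum_add_distrib, ← mul_sum, ← sum_mul, add_assoc]

lemma IsKMeansCoreset.hadamardCenters_bound (h : IsKMeansCoreset d k t ε r w Δ) {n : ℕ} (hk : 2 ≤ k)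
    (hd : d = k * 2 ^ n) (hw : ∀ i, 0 ≤ w i) (hε : 0 ≤ ε) :
    2 ^ n * (Δ + ∑ i, w i * ‖r i‖ ^ 2 + ∑ i, w i) - 2 * √(2 ^ n) * ∑ i, w i * ‖r i‖ ≤
      (1 + ε) * (k * 2 ^ n * (2 * 2 ^ n - √(2 ^ n))) := by
  let ι : Fin k × (Fin n → ZMod 2) ≃ Fin d :=
    ((Equiv.refl _).prodCongr (Fintype.equivFinOfCardEq (by simp))).trans
      (finProdFinEquiv.trans (finCongr hd.symm))
  set e := stdBasisPt d ∘ ι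
  have he : Orthonormal ℝ e := orthonormal_stdBasisPt.comp _ ι.injective
  have hcost : ∀ S, kmeansCostP d S = ∑ p, minSqDist S (e p) := fun S => by
    rw [kmeansCostP_eq]
    exact (Equiv.sum_comp ι _).symm
  calc 2 ^ n * (Δ + ∑ i, w i * ‖r i‖ ^ 2 + ∑ i, w i) - 2 * √(2 ^ n) * ∑ i, w i * ‖r i‖
      ≤ ∑ m, coresetCost r w Δ (hadamardCenters e m) :=
        sum_coresetCost_hadamardCenters_ge he (by omega) r hw Δ
    _ ≤ ∑ m, (1 + ε) * kmeansCostP d (hadamardCenters e m) :=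
        sum_le_sum fun m _ => h.coresetCost_le (card_hadamardCenters he m)
    _ = (1 + ε) * ∑ m, ∑ p, minSqDist (hadamardCenters e m) (e p) := by
        simp only [← mul_sum, hcost]
    _ ≤ (1 + ε) * (k * 2 ^ n * (2 * 2 ^ n - √(2 ^ n))) :=
        mul_le_mul_of_nonneg_left (sum_sum_minSqDist_hadamardCenters_le he hk) (by linarith)

end Coreset

theorem coreset_weighted_norm_lower_bound_general
    (ε : ℝ) (hε0 : 0 < ε)
    (k : ℕ) (hk : 0 < k) (hke : Even k)
    (q : ℕ) (hq2 : ∃ n : ℕ, q = 2 ^ n) (hqε : (q : ℝ) = 1 / (36 * ε ^ 2))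
    (d : ℕ) (hd : d = k * q)
    (t : ℕ) (r : Fin t → EuclideanSpace ℝ (Fin (2 * d))) (w : Fin t → ℝ)
    (hw : ∀ i, 0 < w i) (Δ : ℝ)
    (hcore : IsKMeansCoreset d k t ε r w Δ) :
    (d : ℝ) / 6 ≤ ∑ i, w i * ‖r i‖ := by
  obtain ⟨n, rfl⟩ := hq2
  have hk2 : 2 ≤ k := by obtain ⟨j, rfl⟩ := hke; omega
  have hw0 : ∀ i, 0 ≤ w i := fun i => (hw i).le
  have hfar := fun R (hR : 0 ≤ R) =>
    hcore.farCenters_bound hk (hd ▸ Nat.le_mul_of_pos_right k (by positivity)) hw0 hR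
  have hY : (1 - ε) * d ≤ Δ + ∑ i, w i * ‖r i‖ ^ 2 := by simpa using hfar 0 le_rfl
  have hW : (1 - ε) * d ≤ ∑ i, w i :=
    le_of_forall_mul_sq_le (b := Δ + ∑ i, w i * ‖r i‖ ^ 2 - (1 - ε) * d)
      (c := 2 * ∑ i, w i * ‖r i‖) fun R hR => by linear_combination hfar R hR
  have hH := hcore.hadamardCenters_bound hk2 hd hw0 hε0.le
  set s := √(2 ^ n : ℝ)
  have hs : s * s = 2 ^ n := Real.mul_self_sqrt (by positivity)
  have hs0 : 0 < s := by positivity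
  have hεs : ε * s = 1 / 6 := mul_sqrt_eq_one_div_six hε0 (by exact_mod_cast hqε)
  have hdR : (d : ℝ) = k * 2 ^ n := by exact_mod_cast hd
  rw [← hdR, ← hs] at hH
  have hYs := mul_le_mul_of_nonneg_left hY (mul_self_nonneg s)
  have hWs := mul_le_mul_of_nonneg_left hW (mul_self_nonneg s)
  have hεsd : ε * s * (s * d) = s * d / 6 := by rw [hεs]; ring
  have hεd : ε * s * d = d / 6 := by rw [hεs]; ring
  refine le_of_mul_le_mul_left ?_ hs0
  linarith [(d.cast_nonneg : (0 : ℝ) ≤ d)]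

/-- with `q = 1/(36ε²)` a power of two and `d = k·q`, any `ε`-coreset with offset
of `{e_1,…,e_d}` with `t < d` points satisfies `∑ wᵢ‖rᵢ‖ ≥ d/6`. -/
theorem coreset_weighted_norm_lower_bound
    (ε : ℝ) (hε0 : 0 < ε) (hε : ε < 1 / 2)
    (k : ℕ) (hk : 0 < k) (hke : Even k)
    (q : ℕ) (hq0 : 0 < q) (hq2 : ∃ n : ℕ, q = 2 ^ n) (hqε : (q : ℝ) = 1 / (36 * ε ^ 2))
    (d : ℕ) (hd : d = k * q)
    (t : ℕ) (r : Fin t → EuclideanSpace ℝ (Fin (2 * d))) (w : Fin t → ℝ)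
    (hw : ∀ i, 0 < w i) (Δ : ℝ)
    (hcore : IsKMeansCoreset d k t ε r w Δ) (ht : t < d) :
    (d : ℝ) / 6 ≤ ∑ i, w i * ‖r i‖ :=
  coreset_weighted_norm_lower_bound_general ε hε0 k hk hke q hq2 hqε d hd t r w hw Δ hcore
end

section
/- Let z be a positive integer, let d ≥ 1, and let r_1, …, r_ℓ ∈ ℝ^{2d} and w_1, …, w_ℓ ∈ ℝ_{>0}. There exists a unit vector v ∈ ℝ^{2d} such that ∑_{i=1}^ℓ w_i · min_{ξ∈{−1,1}} ‖r_i − ξ·v‖^z ≤ ∑_{i=1}^ℓ w_i·(‖r_i‖² + 1)^{z/2} − 2·min{1, z/2} · (∑_{i=1}^ℓ w_i·(‖r_i‖² + 1)^{z/2 − 1}·‖r_i‖)/√ℓ. -/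
/-!
Choose signs `εᵢ` greedily so that `‖∑ εᵢ uᵢ‖² ≥ ∑ ‖uᵢ‖²` for `uᵢ = (‖rᵢ‖² + 1)^{z/2-1} wᵢ rᵢ`, and
let `v` be the direction of `∑ εᵢ uᵢ`; by Cauchy–Schwarz `∑ |⟪uᵢ, v⟫| ≥ (∑ ‖uᵢ‖)/√ℓ`. For a unit
vector, `min_ξ ‖rᵢ - ξv‖² = ‖rᵢ‖² + 1 - 2|⟪rᵢ, v⟫|`, and `(a - t)^p ≤ a^p - min(1, p) a^{p-1} t`
(Bernoulli for `p ≤ 1`, monotonicity of `x^{p-1}` for `p ≥ 1`) turns this into the claimed bound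
term by term.
-/

open Finset
open scoped RealInnerProductSpace

theorem Real.rpow_sub_le_rpow_sub_min_mul {a t p : ℝ} (ha : 0 < a) (ht : 0 ≤ t) (hta : t ≤ a)
    (hp : 0 < p) : (a - t) ^ p ≤ a ^ p - min 1 p * a ^ (p - 1) * t := by
  rcases le_total p 1 with hp1 | hp1
  · have hta' : t / a ≤ 1 := (div_le_one ha).mpr hta
    calc (a - t) ^ p = a ^ p * (1 + -(t / a)) ^ p := by
          rw [← Real.mul_rpow ha.le (by linarith)]
          congr 1
          field_simp
          ring
      _ ≤ a ^ p * (1 + p * -(t / a)) := by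
          gcongr
          exact rpow_one_add_le_one_add_mul_self (by linarith) hp.le hp1
      _ = a ^ p - min 1 p * a ^ (p - 1) * t := by
          rw [min_eq_right hp1, Real.rpow_sub_one ha.ne']
          field_simp
          ring
  · have hat : 0 ≤ a - t := sub_nonneg.mpr hta
    calc (a - t) ^ p = (a - t) ^ (p - 1) * (a - t) := by
          rw [← Real.rpow_add_one' hat (by linarith), sub_add_cancel]
      _ ≤ a ^ (p - 1) * (a - t) := by gcongr; linarith
      _ = a ^ p - min 1 p * a ^ (p - 1) * t := by
          rw [min_eq_left hp1, mul_sub, ← Real.rpow_add_one' ha.le (by linarith), sub_add_cancel]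
          ring

section InnerProductSpace

variable {E : Type*} [NormedAddCommGroup E] [InnerProductSpace ℝ E]

theorem exists_abs_eq_one_norm_sq_add_norm_sq_le (x y : E) :
    ∃ c : ℝ, |c| = 1 ∧ ‖x‖ ^ 2 + ‖y‖ ^ 2 ≤ ‖c • x + y‖ ^ 2 := by
  rcases le_total 0 ⟪x, y⟫ with h | h
  · exact ⟨1, abs_one, by rw [one_smul, norm_add_sq_real]; linarith⟩
  · refine ⟨-1, by simp, ?_⟩
    rw [neg_one_smul, norm_add_sq_real, inner_neg_left, norm_neg]
    linarith

theorem exists_abs_eq_one_sum_norm_sq_le {n : ℕ} (u : Fin n → E) :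
    ∃ ε : Fin n → ℝ, (∀ i, |ε i| = 1) ∧ ∑ i, ‖u i‖ ^ 2 ≤ ‖∑ i, ε i • u i‖ ^ 2 := by
  induction n with
  | zero => exact ⟨fun _ => 1, by simp, by simp⟩
  | succ n ih =>
    obtain ⟨ε, hε, hle⟩ := ih (fun i => u i.succ)
    obtain ⟨c, hc, hc_le⟩ :=
      exists_abs_eq_one_norm_sq_add_norm_sq_le (u 0) (∑ i, ε i • u i.succ)
    refine ⟨Fin.cons c ε, Fin.cases hc hε, ?_⟩
    simp only [Fin.sum_univ_succ, Fin.cons_zero, Fin.cons_succ]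
    linarith

theorem exists_norm_eq_one_inner_eq_norm [Nontrivial E] (x : E) :
    ∃ v : E, ‖v‖ = 1 ∧ ⟪x, v⟫ = ‖x‖ := by
  rcases eq_or_ne x 0 with rfl | hx
  · obtain ⟨v, hv⟩ := exists_norm_eq E zero_le_one
    exact ⟨v, hv, by simp⟩
  · refine ⟨‖x‖⁻¹ • x, by simp [norm_smul, hx], ?_⟩
    rw [real_inner_smul_right, real_inner_self_eq_norm_sq]
    field_simp

theorem exists_norm_eq_one_sum_norm_div_sqrt_le_sum_abs_inner [Nontrivial E] {n : ℕ}
    (u : Fin n → E) : ∃ v : E, ‖v‖ = 1 ∧ (∑ i, ‖u i‖) / √n ≤ ∑ i, |⟪u i, v⟫| := by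
  obtain ⟨ε, hε, hsq⟩ := exists_abs_eq_one_sum_norm_sq_le u
  set S := ∑ i, ε i • u i
  obtain ⟨v, hv, hSv⟩ := exists_norm_eq_one_inner_eq_norm S
  refine ⟨v, hv, div_le_of_le_mul₀ (Real.sqrt_nonneg _) (by positivity) ?_⟩
  have hcs : ∑ i, ‖u i‖ ≤ √n * ‖S‖ := by
    rw [← Real.sqrt_sq (norm_nonneg S), ← Real.sqrt_mul (Nat.cast_nonneg _),
      Real.le_sqrt (by positivity) (by positivity)]
    calc (∑ i, ‖u i‖) ^ 2 ≤ n * ∑ i, ‖u i‖ ^ 2 := by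
          simpa using sq_sum_le_card_mul_sum_sq (s := univ) (f := fun i => ‖u i‖)
      _ ≤ n * ‖S‖ ^ 2 := by gcongr
  have hSle : ‖S‖ ≤ ∑ i, |⟪u i, v⟫| := by
    rw [← hSv, sum_inner]
    gcongr with i
    rw [real_inner_smul_left]
    exact (le_abs_self _).trans_eq (by rw [abs_mul, hε i, one_mul])
  calc ∑ i, ‖u i‖ ≤ √n * ‖S‖ := hcs
    _ ≤ (∑ i, |⟪u i, v⟫|) * √n := by rw [mul_comm]; gcongr

theorem min_norm_sub_pow_norm_add_pow (x v : E) (z : ℕ) :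
    min (‖x - v‖ ^ z) (‖x + v‖ ^ z) = (‖x‖ ^ 2 + ‖v‖ ^ 2 - 2 * |⟪x, v⟫|) ^ ((z : ℝ) / 2) := by
  have key : ∀ v : E, 0 ≤ ⟪x, v⟫ →
      min (‖x - v‖ ^ z) (‖x + v‖ ^ z) = (‖x‖ ^ 2 + ‖v‖ ^ 2 - 2 * |⟪x, v⟫|) ^ ((z : ℝ) / 2) := by
    intro v h
    have hle : ‖x - v‖ ≤ ‖x + v‖ := by
      refine le_of_pow_le_pow_left₀ two_ne_zero (norm_nonneg _) ?_
      rw [norm_sub_sq_real, norm_add_sq_real]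
      linarith
    have htwo : ((2 : ℕ) : ℝ) * (z / 2) = z := by push_cast; ring
    rw [min_eq_left (pow_le_pow_left₀ (norm_nonneg _) hle z), ← Real.rpow_natCast,
      ← htwo, Real.rpow_natCast_mul (norm_nonneg _), norm_sub_sq_real, abs_of_nonneg h]
    ring_nf
  rcases le_total 0 ⟪x, v⟫ with h | h
  · exact key v h
  · have := key (-v) (by rw [inner_neg_right]; linarith)
    rwa [sub_neg_eq_add, ← sub_eq_add_neg, min_comm, norm_neg, inner_neg_right, abs_neg] at this

theorem min_norm_sub_pow_norm_add_pow_le {x v : E} (hv : ‖v‖ = 1) {z : ℕ} (hz : 0 < z) :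
    min (‖x - v‖ ^ z) (‖x + v‖ ^ z) ≤ (‖x‖ ^ 2 + 1) ^ ((z : ℝ) / 2) -
      2 * min 1 ((z : ℝ) / 2) * ((‖x‖ ^ 2 + 1) ^ ((z : ℝ) / 2 - 1) * |⟪x, v⟫|) := by
  have hxv : |⟪x, v⟫| ≤ ‖x‖ := by simpa [hv] using abs_real_inner_le_norm x v
  have hle : 2 * |⟪x, v⟫| ≤ ‖x‖ ^ 2 + 1 := by nlinarith [two_mul_le_add_sq ‖x‖ 1]
  rw [min_norm_sub_pow_norm_add_pow, hv, one_pow]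
  calc (‖x‖ ^ 2 + 1 - 2 * |⟪x, v⟫|) ^ ((z : ℝ) / 2)
      ≤ (‖x‖ ^ 2 + 1) ^ ((z : ℝ) / 2) -
          min 1 ((z : ℝ) / 2) * (‖x‖ ^ 2 + 1) ^ ((z : ℝ) / 2 - 1) * (2 * |⟪x, v⟫|) :=
        Real.rpow_sub_le_rpow_sub_min_mul (by positivity) (by positivity) hle (by positivity)
    _ = _ := by ring

end InnerProductSpace

/-- For weighted points in `ℝ^{2d}` and a positive integer `z`, there is a unit
vector `v` with `∑ wᵢ · min_{ξ∈{−1,1}} ‖rᵢ − ξv‖^z ≤ ∑ wᵢ(‖rᵢ‖²+1)^{z/2}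
− 2·min{1, z/2}·(∑ wᵢ(‖rᵢ‖²+1)^{z/2−1}‖rᵢ‖)/√ℓ`. -/
theorem exists_unit_vector_power_reduction
    (z : ℕ) (hz : 0 < z) (d ℓ : ℕ) (hd : 0 < d)
    (r : Fin ℓ → EuclideanSpace ℝ (Fin (2 * d)))
    (w : Fin ℓ → ℝ) (hw : ∀ i, 0 < w i) :
    ∃ v : EuclideanSpace ℝ (Fin (2 * d)), ‖v‖ = 1 ∧
      ∑ i, w i * min (‖r i - v‖ ^ z) (‖r i - (-1 : ℝ) • v‖ ^ z) ≤
        (∑ i, w i * (‖r i‖ ^ 2 + 1) ^ ((z : ℝ) / 2)) -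
          2 * min 1 ((z : ℝ) / 2) *
            ((∑ i, w i * (‖r i‖ ^ 2 + 1) ^ ((z : ℝ) / 2 - 1) * ‖r i‖) / Real.sqrt ℓ) := by
  set p : ℝ := (z : ℝ) / 2
  have : Nontrivial (EuclideanSpace ℝ (Fin (2 * d))) :=
    Module.nontrivial_of_finrank_pos (by rw [finrank_euclideanSpace_fin]; omega)
  set c : Fin ℓ → ℝ := fun i => w i * (‖r i‖ ^ 2 + 1) ^ (p - 1)
  have hc : ∀ i, 0 ≤ c i := fun i => by have := hw i; positivity
  obtain ⟨v, hv, hproj⟩ :=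
    exists_norm_eq_one_sum_norm_div_sqrt_le_sum_abs_inner (fun i => c i • r i)
  simp only [norm_smul, real_inner_smul_left, abs_mul, Real.norm_eq_abs, abs_of_nonneg (hc _)]
    at hproj
  refine ⟨v, hv, ?_⟩
  calc ∑ i, w i * min (‖r i - v‖ ^ z) (‖r i - (-1 : ℝ) • v‖ ^ z)
      ≤ ∑ i, w i * ((‖r i‖ ^ 2 + 1) ^ p -
          2 * min 1 p * ((‖r i‖ ^ 2 + 1) ^ (p - 1) * |⟪r i, v⟫|)) := by
        gcongr with i
        · exact (hw i).le
        · rw [neg_one_smul, sub_neg_eq_add]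
          exact min_norm_sub_pow_norm_add_pow_le hv hz
    _ = (∑ i, w i * (‖r i‖ ^ 2 + 1) ^ p) - 2 * min 1 p * ∑ i, c i * |⟪r i, v⟫| := by
        rw [mul_sum, ← sum_sub_distrib]
        congr 1 with i
        ring
    _ ≤ _ := by gcongr
end

section
/- Let z be a positive integer and d, k positive integers, and consider the point set P = {e_1, …, e_d} of the first d standard basis vectors in ℝ^{2d}. For any set of k centers c_1, …, c_k ∈ ℝ^{2d}, all of Euclidean norm 1 and such that for every index j there is an index i with c_j = −c_i, it holds that ∑_{i=1}^d min_{j=1,…,k} ‖e_i − c_j‖^z ≥ 2^{z/2}·d − 2^{z/2}·max{1, z/2}·√(dk). -/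
open Finset

private lemma bernoulli_aux {p u : ℝ} (hp : 0 < p) (hu0 : 0 ≤ u) (hu1 : u ≤ 1) :
    1 - max 1 p * u ≤ (1 - u) ^ p := by
  rcases le_or_gt 1 p with h | h
  · rw [max_eq_right h]
    have := one_add_mul_self_le_rpow_one_add (s := -u) (by linarith) h
    have h2 : 1 + -u = 1 - u := by ring
    rw [h2] at this
    linarith
  · rw [max_eq_left h.le]
    rcases eq_or_lt_of_le hu1 with he | hlt
    · subst he
      simp [Real.zero_rpow (ne_of_gt hp)]
    · have hx : (0:ℝ) < 1 - u := by linarith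
      calc 1 - 1 * u = (1 - u) ^ (1:ℝ) := by rw [Real.rpow_one]; ring
        _ ≤ (1 - u) ^ p := Real.rpow_le_rpow_of_exponent_ge hx (by linarith) h.le

/-- Any clustering of the first `d` standard basis vectors of `ℝ^{2d}` with `k`
unit-norm centers closed under negation has `(k,z)`-cost at least
`2^{z/2}·d − 2^{z/2}·max{1, z/2}·√(dk)`. -/
theorem kz_unit_centers_lower_bound
    (z : ℕ) (hz : 0 < z) (d k : ℕ) (hd : 0 < d) (hk : 0 < k)
    (c : Fin k → EuclideanSpace ℝ (Fin (2 * d)))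
    (hc : ∀ j, ‖c j‖ = 1) (hsym : ∀ j, ∃ i, c j = -c i) :
    (2 : ℝ) ^ ((z : ℝ) / 2) * d -
        (2 : ℝ) ^ ((z : ℝ) / 2) * max 1 ((z : ℝ) / 2) * Real.sqrt (d * k) ≤
      ∑ i : Fin d, ⨅ j : Fin k,
        ‖EuclideanSpace.single (Fin.castLE (by omega) i) (1 : ℝ) - c j‖ ^ z := by
  have hdd : d ≤ 2 * d := by omega
  haveI : Nonempty (Fin k) := Fin.pos_iff_nonempty.mp hk
  set p : ℝ := (z : ℝ) / 2 with hpdef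
  have hp : 0 < p := by positivity
  set M : ℝ := max 1 p with hMdef
  have hM1 : (1:ℝ) ≤ M := le_max_left _ _
  have hM0 : (0:ℝ) ≤ M := by linarith
  -- the coordinate of center j at position i
  set t : Fin d → Fin k → ℝ := fun i j => c j (Fin.castLE hdd i) with htdef
  have habs : ∀ i j, |t i j| ≤ 1 := by
    intro i j
    have h1 : |t i j| = Real.sqrt ((t i j) ^ 2) := (Real.sqrt_sq_eq_abs _).symm
    rw [← hc j, EuclideanSpace.norm_eq, h1]
    apply Real.sqrt_le_sqrt
    exact Finset.single_le_sum (f := fun l => (c j l) ^ 2)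
      (fun l _ => sq_nonneg _) (Finset.mem_univ _) |>.trans_eq (by simp [abs_sq])
  -- key pointwise bound
  have hkey : ∀ (i : Fin d) (j : Fin k),
      (2:ℝ) ^ p * (1 - M * |t i j|) ≤
        ‖EuclideanSpace.single (Fin.castLE hdd i) (1 : ℝ) - c j‖ ^ z := by
    intro i j
    set a : ℝ := ‖EuclideanSpace.single (Fin.castLE hdd i) (1 : ℝ) - c j‖ with hadef
    have ha0 : 0 ≤ a := norm_nonneg _
    have hsq : a ^ 2 = 2 - 2 * t i j := by
      have := @norm_sub_sq_real (EuclideanSpace ℝ (Fin (2 * d))) _ _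
        (EuclideanSpace.single (Fin.castLE hdd i) (1 : ℝ)) (c j)
      rw [hadef, this, EuclideanSpace.inner_single_left, EuclideanSpace.norm_single, hc j]
      simp [htdef]
      ring
    have haz : (a:ℝ) ^ z = (a ^ 2) ^ p := by
      rw [← Real.rpow_natCast a z, ← Real.rpow_natCast a 2, ← Real.rpow_mul ha0]
      congr 1
      rw [hpdef]; push_cast; ring
    have h1 : (2 - 2 * |t i j|) ^ p ≤ (a ^ 2) ^ p := by
      apply Real.rpow_le_rpow (by have := habs i j; linarith)
      · rw [hsq]; have := abs_le.mp (le_refl |t i j|)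
        have := le_abs_self (t i j); linarith
      · exact hp.le
    have h2 : (2 - 2 * |t i j|) ^ p = (2:ℝ) ^ p * (1 - |t i j|) ^ p := by
      rw [← Real.mul_rpow (by norm_num) (by have := habs i j; linarith)]
      congr 1; ring
    have h3 : 1 - M * |t i j| ≤ (1 - |t i j|) ^ p :=
      bernoulli_aux hp (abs_nonneg _) (habs i j)
    have h4 : (2:ℝ) ^ p * (1 - M * |t i j|) ≤ (2:ℝ) ^ p * (1 - |t i j|) ^ p :=
      mul_le_mul_of_nonneg_left h3 (Real.rpow_nonneg (by norm_num) _)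
    rw [haz]
    calc (2:ℝ) ^ p * (1 - M * |t i j|) ≤ (2:ℝ) ^ p * (1 - |t i j|) ^ p := h4
      _ = (2 - 2 * |t i j|) ^ p := h2.symm
      _ ≤ (a ^ 2) ^ p := h1
  -- per-point bound via sup of |t i j|
  have hne : (Finset.univ : Finset (Fin k)).Nonempty := Finset.univ_nonempty
  set s : Fin d → ℝ := fun i => Finset.univ.sup' hne (fun j => |t i j|) with hsdef
  have hs0 : ∀ i, 0 ≤ s i := fun i => by
    obtain ⟨j⟩ := Fin.pos_iff_nonempty.mp hk
    exact le_trans (abs_nonneg (t i j))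
      (Finset.le_sup' (fun j => |t i j|) (Finset.mem_univ j))
  have hinf : ∀ i : Fin d, (2:ℝ) ^ p * (1 - M * s i) ≤
      ⨅ j : Fin k, ‖EuclideanSpace.single (Fin.castLE hdd i) (1 : ℝ) - c j‖ ^ z := by
    intro i
    apply le_ciInf
    intro j
    refine le_trans ?_ (hkey i j)
    have hts : |t i j| ≤ s i := Finset.le_sup' (fun j => |t i j|) (Finset.mem_univ j)
    have hmul : M * |t i j| ≤ M * s i := mul_le_mul_of_nonneg_left hts hM0
    exact mul_le_mul_of_nonneg_left (by linarith)
      (Real.rpow_nonneg (show (0:ℝ) ≤ 2 by norm_num) p)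
  -- sum of s is at most sqrt (d k)
  have hsum_sq : ∑ i : Fin d, (s i) ^ 2 ≤ (k : ℝ) := by
    have hstep : ∀ i : Fin d, (s i) ^ 2 ≤ ∑ j : Fin k, (t i j) ^ 2 := by
      intro i
      obtain ⟨j0, _, hj0⟩ := Finset.exists_mem_eq_sup' hne (fun j => |t i j|)
      rw [hsdef]
      simp only
      rw [hj0, sq_abs]
      exact Finset.single_le_sum (f := fun j => (t i j) ^ 2)
        (fun j _ => sq_nonneg _) (Finset.mem_univ _)
    calc ∑ i : Fin d, (s i) ^ 2 ≤ ∑ i : Fin d, ∑ j : Fin k, (t i j) ^ 2 :=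
          Finset.sum_le_sum fun i _ => hstep i
      _ = ∑ j : Fin k, ∑ i : Fin d, (t i j) ^ 2 := Finset.sum_comm
      _ ≤ ∑ j : Fin k, (1:ℝ) := by
          apply Finset.sum_le_sum
          intro j _
          have hnorm : ∑ l : Fin (2 * d), (c j l) ^ 2 = 1 := by
            have hnn : (0:ℝ) ≤ ∑ l : Fin (2 * d), ‖c j l‖ ^ 2 :=
              Finset.sum_nonneg fun l _ => sq_nonneg _
            have hh : ‖c j‖ ^ 2 = ∑ l : Fin (2 * d), ‖c j l‖ ^ 2 := by
              rw [EuclideanSpace.norm_eq, Real.sq_sqrt hnn]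
            rw [hc j] at hh
            simpa [Real.norm_eq_abs, sq_abs] using hh.symm
          rw [← hnorm]
          have hinj : Function.Injective (Fin.castLE hdd) := Fin.castLE_injective hdd
          rw [show (∑ i : Fin d, (t i j) ^ 2) =
              ∑ l ∈ Finset.univ.image (Fin.castLE hdd), (c j l) ^ 2 by
            rw [Finset.sum_image (fun a _ b _ h => hinj h)]]
          exact Finset.sum_le_sum_of_subset_of_nonneg (Finset.subset_univ _)
            (fun l _ _ => sq_nonneg _)
      _ = (k : ℝ) := by simp
  have hsum_s : ∑ i : Fin d, s i ≤ Real.sqrt (d * k) := by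
    have h1 : (∑ i : Fin d, s i) ^ 2 ≤ (d : ℝ) * ∑ i : Fin d, (s i) ^ 2 := by
      have := sq_sum_le_card_mul_sum_sq (s := (Finset.univ : Finset (Fin d))) (f := s)
      simpa using this
    have h2 : (∑ i : Fin d, s i) ^ 2 ≤ (d : ℝ) * k :=
      h1.trans (mul_le_mul_of_nonneg_left hsum_sq (Nat.cast_nonneg d))
    have h3 : ∑ i : Fin d, s i ≤ Real.sqrt ((∑ i : Fin d, s i) ^ 2) := by
      rw [Real.sqrt_sq (Finset.sum_nonneg fun i _ => hs0 i)]
    exact h3.trans (by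
      apply Real.sqrt_le_sqrt
      exact_mod_cast h2)
  -- combine
  calc (2:ℝ) ^ p * d - (2:ℝ) ^ p * M * Real.sqrt (d * k)
      ≤ (2:ℝ) ^ p * d - (2:ℝ) ^ p * M * ∑ i : Fin d, s i := by
        have := mul_le_mul_of_nonneg_left hsum_s
          (mul_nonneg (Real.rpow_nonneg (by norm_num : (0:ℝ) ≤ 2) p) hM0)
        linarith
    _ = ∑ i : Fin d, (2:ℝ) ^ p * (1 - M * s i) := by
        rw [Finset.sum_congr rfl (fun i _ => by ring : ∀ i ∈ Finset.univ,
          (2:ℝ) ^ p * (1 - M * s i) = (2:ℝ)^p - (2:ℝ)^p * M * s i)]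
        rw [Finset.sum_sub_distrib, ← Finset.mul_sum]
        simp [mul_comm]
    _ ≤ ∑ i : Fin d, ⨅ j : Fin k,
        ‖EuclideanSpace.single (Fin.castLE hdd i) (1 : ℝ) - c j‖ ^ z :=
        Finset.sum_le_sum fun i _ => hinf i
end
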